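/- Let A be a positive semi-definite Hermitian n×n complex matrix. Then ρ_per(A) + η_per(A) = n, where ρ_per is the permanental rank and η_per is the multiplicity of 0 as a root of the permanental polynomial per(A − xI). -/

import Mathlib

open scoped ComplexOrder

/-- The permanent of a (possibly rectangular) matrix whose rows and columns are indexed by
finite types: the sum over all bijections `e : ι ≃ κ` of `∏ i, M i (e i)`.
For a square matrix this is the usual permanent `∑_{σ ∈ S_n} ∏_{i} M i (σ i)`. -/
noncomputable def Matrix.per {ι κ R : Type*} [Fintype ι] [Fintype κ] [DecidableEq ι]
    [DecidableEq κ] [CommSemiring R] (M : Matrix ι κ R) : R :=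
  ∑ e : ι ≃ κ, ∏ i, M i (e i)

/-- The permanental rank `ρ_per(A)` of an `n × n` matrix: the largest `k` such that some
`k × k` submatrix (rows chosen by an injection `f`, columns by an injection `g`) has
nonzero permanent. -/
noncomputable def permRank {n : ℕ} {R : Type*} [CommSemiring R]
    (A : Matrix (Fin n) (Fin n) R) : ℕ :=
  sSup {k | ∃ f g : Fin k → Fin n, Function.Injective f ∧ Function.Injective g ∧
    (A.submatrix f g).per ≠ 0}

/-- The permanental polynomial `π(A, x) = per(A - x I)`. -/
noncomputable def permPoly {n : ℕ} {R : Type*} [CommRing R]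
    (A : Matrix (Fin n) (Fin n) R) : Polynomial R :=
  (A.map Polynomial.C - (Polynomial.X : Polynomial R) • (1 : Matrix (Fin n) (Fin n) (Polynomial R))).per

/-- The permanental nullity `η_per(A)`: the multiplicity of `0` as a root of the
permanental polynomial. -/
noncomputable def permNullity {n : ℕ} {R : Type*} [CommRing R]
    (A : Matrix (Fin n) (Fin n) R) : ℕ :=
  (permPoly A).rootMultiplicity 0

/-!
Write `A = Bᴴ * B`. By a Cauchy–Binet formula for permanents, `k! * per A[f, g]` is the inner
product of the vectors `(per B[l, f])_l` and `(per B[l, g])_l`, for `l` ranging over all maps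
into the rows of `B`. Hence every principal permanental minor of `A` is nonnegative, and
`per A[f, g] ≠ 0` forces `per A[f, f] ≠ 0`, so the permanental rank is the largest size `K` of a
principal submatrix with nonzero permanent. Expanding `per (A - x I) = ∑_S per A[S] (-x)^(n - |S|)`,
the coefficient of `x^(n - k)` is `±` the sum of the principal `k × k` permanental minors, which
by nonnegativity vanishes exactly when all of them do. So the lowest nonzero coefficient is the
one of `x^(n - K)`.
-/

open Finset Polynomial

namespace Matrix

variable {ι κ m R : Type*} [Fintype ι] [Fintype κ] [Fintype m]
  [DecidableEq ι] [DecidableEq κ]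

section CommSemiring

variable [CommSemiring R]

theorem per_submatrix_equiv {ι' κ' : Type*} [Fintype ι'] [Fintype κ'] [DecidableEq ι']
    [DecidableEq κ'] (M : Matrix ι κ R) (e₁ : ι' ≃ ι) (e₂ : κ' ≃ κ) :
    (M.submatrix e₁ e₂).per = M.per := by
  refine Fintype.sum_equiv (e₁.equivCongr e₂) _ _ fun e => ?_
  rw [← Equiv.prod_comp e₁]
  simp [Equiv.equivCongr]

theorem per_of_isEmpty [IsEmpty ι] [IsEmpty κ] (M : Matrix ι κ R) : M.per = 1 := by
  have : Unique (ι ≃ κ) := ⟨⟨Equiv.equivOfIsEmpty ι κ⟩, fun _ => Equiv.ext isEmptyElim⟩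
  rw [per, Fintype.sum_unique, Finset.prod_of_isEmpty]

theorem per_map {S : Type*} [CommSemiring S] (M : Matrix ι κ R) (f : R →+* S) :
    (M.map f).per = f M.per := by
  simp [per, map_sum, map_prod]

theorem per_transpose (M : Matrix ι κ R) : Mᵀ.per = M.per := by
  refine Fintype.sum_equiv (Equiv.symmEquiv ι κ).symm _ _ fun e => ?_
  rw [← Equiv.prod_comp e]
  simp

theorem per_conjTranspose [StarRing R] (M : Matrix ι κ R) : Mᴴ.per = star M.per := by
  change (Mᵀ.map (starRingEnd R)).per = _
  rw [per_map, per_transpose]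
  rfl

theorem per_mul_eq_sum (C : Matrix κ m R) (D : Matrix m κ R) :
    (C * D).per = ∑ l : κ → m, (∏ i, C i (l i)) * (D.submatrix l id).per := by
  simp only [per, mul_apply, Finset.prod_univ_sum, Fintype.piFinset_univ, mul_sum,
    ← prod_mul_distrib, submatrix_apply, id]
  exact Finset.sum_comm

/-- A Cauchy–Binet formula for permanents. The factorial comes from averaging `per_mul_eq_sum`
over the reorderings `l ∘ τ`, under which `per D[l, ·]` is invariant. -/
theorem factorial_mul_per_mul (C : Matrix κ m R) (D : Matrix m κ R) :
    (Fintype.card κ).factorial * (C * D).per =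
      ∑ l : κ → m, (C.submatrix id l).per * (D.submatrix l id).per := by
  have hrow (l : κ → m) (τ : Equiv.Perm κ) :
      (D.submatrix (l ∘ τ) id).per = (D.submatrix l id).per :=
    per_submatrix_equiv (D.submatrix l id) τ (Equiv.refl κ)
  calc (Fintype.card κ).factorial * (C * D).per
      = ∑ τ : Equiv.Perm κ, ∑ l : κ → m, (∏ i, C i (l i)) * (D.submatrix l id).per := by
        rw [per_mul_eq_sum, Finset.sum_const, Finset.card_univ, Fintype.card_perm, nsmul_eq_mul]
    _ = ∑ τ : Equiv.Perm κ, ∑ l : κ → m, (∏ i, C i (l (τ i))) * (D.submatrix l id).per := by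
        refine Finset.sum_congr rfl fun τ _ => ?_
        refine Fintype.sum_equiv (Equiv.arrowCongr τ (Equiv.refl m)) _ _ fun l => ?_
        simp only [Equiv.arrowCongr_apply, Equiv.coe_refl, Function.comp_apply,
          Equiv.symm_apply_apply]
        exact congrArg _ (hrow l τ.symm).symm
    _ = ∑ l : κ → m, (C.submatrix id l).per * (D.submatrix l id).per := by
        rw [Finset.sum_comm]
        simp [per, sum_mul]

noncomputable def principalPer (A : Matrix ι ι R) (S : Finset ι) : R :=
  (A.submatrix ((↑) : S → ι) (↑) : Matrix S S R).per

omit [Fintype ι] in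
theorem principalPer_empty (A : Matrix ι ι R) : A.principalPer ∅ = 1 :=
  per_of_isEmpty _

omit [Fintype ι] in
theorem principalPer_map {S : Type*} [CommSemiring S] (A : Matrix ι ι R) (f : R →+* S)
    (T : Finset ι) : (A.map f).principalPer T = f (A.principalPer T) :=
  per_map _ f

omit [Fintype ι] in
theorem principalPer_image (A : Matrix ι ι R) {f : κ → ι} (hf : Function.Injective f) :
    A.principalPer (univ.image f) = (A.submatrix f f).per := by
  let e : κ ≃ univ.image f :=
    Equiv.ofBijective (fun i => ⟨f i, mem_image_of_mem f (mem_univ i)⟩)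
      ⟨fun _ _ h => hf (congrArg Subtype.val h), fun ⟨_, hx⟩ => by simpa using hx⟩
  exact (per_submatrix_equiv (A.submatrix ((↑) : univ.image f → ι) (↑)) e e).symm

theorem sum_perm_fixing_compl_eq_principalPer (A : Matrix ι ι R) (S : Finset ι) :
    ∑ e : {e : Equiv.Perm ι // ∀ i, i ∉ S → e i = i}, ∏ i ∈ S, A i (e.1 i) =
      A.principalPer S := by
  refine (Fintype.sum_equiv (Equiv.Perm.subtypeEquivSubtypePerm (· ∈ S)) _ _ fun σ => ?_).symm
  rw [← Finset.prod_attach S]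
  refine Fintype.prod_equiv (Equiv.subtypeEquivRight fun _ => Iff.rfl) _ _ fun i => ?_
  simp

theorem per_add_diagonal (A : Matrix ι ι R) (d : ι → R) :
    (A + diagonal d).per = ∑ S : Finset ι, A.principalPer S * ∏ i ∈ Sᶜ, d i := by
  calc (A + diagonal d).per
      = ∑ e : Equiv.Perm ι, ∑ S : Finset ι,
          (∏ i ∈ S, A i (e i)) * ∏ i ∈ Sᶜ, if i = e i then d i else 0 := by
        refine Finset.sum_congr rfl fun e _ => ?_
        simp only [add_apply, diagonal_apply]
        rw [Fintype.prod_add]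
    _ = ∑ S : Finset ι, A.principalPer S * ∏ i ∈ Sᶜ, d i := by
        rw [Finset.sum_comm]
        refine Finset.sum_congr rfl fun S _ => ?_
        simp_rw [Finset.prod_ite_zero, mul_ite, mul_zero, ← Finset.sum_filter, ← Finset.sum_mul]
        rw [Finset.sum_subtype _ (p := fun e : Equiv.Perm ι => ∀ i, i ∉ S → e i = i),
          sum_perm_fixing_compl_eq_principalPer]
        simp [eq_comm]

end CommSemiring

end Matrix

section PermanentalPolynomial

variable {n : ℕ} {R : Type*} [CommRing R]

theorem permPoly_eq_sum (A : Matrix (Fin n) (Fin n) R) :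
    permPoly A = ∑ S : Finset (Fin n), C (A.principalPer S) * (-X) ^ (n - #S) := by
  have hdiag : A.map C - (X : R[X]) • (1 : Matrix (Fin n) (Fin n) R[X]) =
      A.map C + Matrix.diagonal fun _ => -X := by
    rw [sub_eq_add_neg, Matrix.smul_one_eq_diagonal, Matrix.diagonal_neg]
  simp [permPoly, hdiag, Matrix.per_add_diagonal, Matrix.principalPer_map, card_compl]

theorem coeff_permPoly (A : Matrix (Fin n) (Fin n) R) {m : ℕ} (hm : m ≤ n) :
    (permPoly A).coeff m = (-1) ^ m * ∑ S ∈ powersetCard (n - m) univ, A.principalPer S := by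
  have hterm (S : Finset (Fin n)) :
      (C (A.principalPer S) * (-X) ^ (n - #S)).coeff m =
        if #S = n - m then (-1) ^ m * A.principalPer S else 0 := by
    have hS : #S ≤ n := by simpa using card_le_univ S
    rw [neg_pow, ← C_1, ← C_neg, ← C_pow, ← mul_assoc, ← C_mul, coeff_C_mul_X_pow]
    by_cases h : #S = n - m
    · rw [if_pos (by omega), if_pos h, h, Nat.sub_sub_self hm, mul_comm]
    · rw [if_neg (by omega), if_neg h]
  simp_rw [permPoly_eq_sum, finsetSum_coeff, hterm, ← sum_filter, mul_sum, powersetCard_eq_filter,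
    powerset_univ]

theorem sSup_add_permNullity [Nontrivial R] (A : Matrix (Fin n) (Fin n) R) :
    sSup {k | ∑ S ∈ powersetCard k univ, A.principalPer S ≠ 0} + permNullity A = n := by
  set T := {k | ∑ S ∈ powersetCard k univ, A.principalPer S ≠ 0}
  have hzero : 0 ∈ T := by simp [T, Matrix.principalPer_empty]
  have hbound : n ∈ upperBounds T := fun k hk => by
    by_contra! h
    exact hk (by rw [powersetCard_eq_empty.mpr (by rwa [card_univ, Fintype.card_fin]), sum_empty])
  have hmem : sSup T ∈ T := Nat.sSup_mem ⟨0, hzero⟩ ⟨n, hbound⟩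
  have hle : sSup T ≤ n := hbound hmem
  have hcoeff : (permPoly A).coeff (n - sSup T) ≠ 0 := by
    rw [coeff_permPoly A (Nat.sub_le n _), Nat.sub_sub_self hle]
    exact neg_one_pow_mul_eq_zero_iff.not.mpr hmem
  have htrailing : (permPoly A).natTrailingDegree = n - sSup T := by
    refine le_antisymm (natTrailingDegree_le_of_ne_zero hcoeff) ?_
    refine le_natTrailingDegree (fun h => hcoeff (by simp [h])) fun m hm => ?_
    have hgt : sSup T < n - m := by omega
    rw [coeff_permPoly A (by omega), not_not.mp (notMem_of_csSup_lt hgt ⟨n, hbound⟩), mul_zero]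
  rw [permNullity, rootMultiplicity_eq_natTrailingDegree', htrailing]
  omega

end PermanentalPolynomial

namespace Matrix

variable {ι κ m R : Type*} [Fintype κ] [Fintype m] [DecidableEq κ]

theorem factorial_mul_per_conjTranspose_mul_submatrix [CommSemiring R] [StarRing R]
    (B : Matrix m ι R) (f g : κ → ι) :
    (Fintype.card κ).factorial * ((Bᴴ * B).submatrix f g).per =
      ∑ l : κ → m, star (B.submatrix l f).per * (B.submatrix l g).per := by
  rw [submatrix_mul _ _ f id g Function.bijective_id, factorial_mul_per_mul]
  simp_rw [submatrix_submatrix, Function.id_comp, Function.comp_id, ← conjTranspose_submatrix,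
    per_conjTranspose]

variable {𝕜 : Type*} [RCLike 𝕜] [Fintype ι] [DecidableEq ι]

theorem PosSemidef.exists_eq_conjTranspose_mul_self {A : Matrix ι ι 𝕜} (hA : A.PosSemidef) :
    ∃ B : Matrix ι ι 𝕜, A = Bᴴ * B := by
  open scoped MatrixOrder Matrix.Norms.L2Operator in
  exact CStarAlgebra.nonneg_iff_eq_star_mul_self.mp hA.nonneg

theorem PosSemidef.per_submatrix_self_nonneg {A : Matrix ι ι 𝕜} (hA : A.PosSemidef)
    (f : κ → ι) : 0 ≤ (A.submatrix f f).per := by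
  obtain ⟨B, rfl⟩ := hA.exists_eq_conjTranspose_mul_self
  have hgram := factorial_mul_per_conjTranspose_mul_submatrix B f f
  refine le_of_mul_le_mul_left ?_ (by positivity : (0 : 𝕜) < (Fintype.card κ).factorial)
  rw [mul_zero, hgram]
  exact sum_nonneg fun l _ => star_mul_self_nonneg _

/-- With `A = Bᴴ * B`, `k! * per A[f, g]` is the inner product of the vectors `l ↦ per B[l, f]`
and `l ↦ per B[l, g]`, so this is a weak form of Cauchy–Schwarz. -/
theorem PosSemidef.per_submatrix_eq_zero_of_self {A : Matrix ι ι 𝕜} (hA : A.PosSemidef)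
    {f : κ → ι} (hf : (A.submatrix f f).per = 0) (g : κ → ι) : (A.submatrix f g).per = 0 := by
  obtain ⟨B, rfl⟩ := hA.exists_eq_conjTranspose_mul_self
  have hfac : ((Fintype.card κ).factorial : 𝕜) ≠ 0 := by positivity
  have hself := factorial_mul_per_conjTranspose_mul_submatrix B f f
  rw [hf, mul_zero, eq_comm,
    sum_eq_zero_iff_of_nonneg fun l _ => star_mul_self_nonneg (B.submatrix l f).per] at hself
  have hw (l : κ → ι) : (B.submatrix l f).per = 0 := by simpa using hself l (mem_univ l)
  simpa [hfac, hw] using factorial_mul_per_conjTranspose_mul_submatrix B f g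

theorem PosSemidef.principalPer_nonneg {A : Matrix ι ι 𝕜} (hA : A.PosSemidef) (S : Finset ι) :
    0 ≤ A.principalPer S :=
  hA.per_submatrix_self_nonneg _

theorem PosSemidef.sum_powersetCard_principalPer_ne_zero_iff {A : Matrix ι ι 𝕜}
    (hA : A.PosSemidef) (k : ℕ) :
    ∑ S ∈ powersetCard k univ, A.principalPer S ≠ 0 ↔
      ∃ S : Finset ι, #S = k ∧ A.principalPer S ≠ 0 := by
  rw [Ne, sum_eq_zero_iff_of_nonneg fun S _ => hA.principalPer_nonneg S]
  simp

theorem PosSemidef.permRank_eq {n : ℕ} {A : Matrix (Fin n) (Fin n) 𝕜} (hA : A.PosSemidef) :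
    permRank A = sSup {k | ∃ S : Finset (Fin n), #S = k ∧ A.principalPer S ≠ 0} := by
  rw [permRank]
  congr 1
  ext k
  constructor
  · rintro ⟨f, g, hf, -, hfg⟩
    refine ⟨univ.image f, by rw [card_image_of_injective _ hf, card_univ, Fintype.card_fin], ?_⟩
    rw [principalPer_image A hf]
    exact fun h => hfg (hA.per_submatrix_eq_zero_of_self h g)
  · rintro ⟨S, rfl, hS⟩
    let f := S.orderEmbOfFin rfl
    refine ⟨f, f, f.injective, f.injective, ?_⟩
    rwa [← principalPer_image A f.injective, image_orderEmbOfFin_univ]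

end Matrix

theorem perm_rank_add_nullity_of_posSemidef_complex_general {n : ℕ} (A : Matrix (Fin n) (Fin n) ℂ)
    (hpsd : A.PosSemidef) :
    permRank A + permNullity A = n := by
  have h := sSup_add_permNullity A
  simp_rw [hpsd.sum_powersetCard_principalPer_ne_zero_iff] at h
  rwa [hpsd.permRank_eq]

/-- For a positive semi-definite Hermitian `n × n` complex matrix `A`,
`ρ_per(A) + η_per(A) = n`. -/
theorem perm_rank_add_nullity_of_posSemidef_complex {n : ℕ} (A : Matrix (Fin n) (Fin n) ℂ)
    (hherm : A.IsHermitian) (hpsd : A.PosSemidef) :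
    permRank A + permNullity A = n :=
  perm_rank_add_nullity_of_posSemidef_complex_general A hpsd
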